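/- arXiv:1910.07814 — 2 statements merged into one kernel-verified Lean document; each statement's English description precedes it below -/
import Mathlib

section
/- Let n be squarefree and let G(d,e,k) and G(d',e',k') be two groups as above with de = d'e' = n. Then G(d,e,k) ≅ G(d',e',k') if and only if d = d', e = e', and k and k' generate the same cyclic subgroup of (ℤ/eℤ)ˣ. -/
/-!
Since `k` has order exactly `d` modulo `e`, `G(d,e,k)` is the semidirect product `C_e ⋊ C_d`
in which the generator of `C_d` multiplies `C_e = ℤ/eℤ` by `k`, and this action is faithful.
Faithfulness makes `C_e` self-centralising, so every nontrivial normal subgroup meets `C_e`: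
a prime `p` divides `e` if and only if the group has a normal subgroup of order `p`. As `e` is
squarefree, this determines `e`, and then `d = n / e`. An isomorphism sends `σ` into `C_e`
(its order `e` is prime to `d`), onto a generator; conjugating that generator by the image of `τ`
multiplies it both by `k` and by a power of `k'`, so `k ∈ ⟨k'⟩`. Conversely, if `k = k'^m` and
`k' = k^m'`, then `τ ↦ τ^m` and `τ ↦ τ^m'` (fixing `σ`) are mutually inverse.
-/

/-- The relators for the group `G(d,e,k) = ⟨σ, τ | σ^e = τ^d = 1, τστ⁻¹ = σ^k⟩`. -/
def braceRels (d e k : ℕ) : Set (FreeGroup (Fin 2)) :=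
  {FreeGroup.of 0 ^ e, FreeGroup.of 1 ^ d,
    FreeGroup.of 1 * FreeGroup.of 0 * (FreeGroup.of 1)⁻¹ * (FreeGroup.of 0 ^ k)⁻¹}

/-- The group `G(d,e,k)` presented by generators σ (index 0) and τ (index 1). -/
abbrev GGrp (d e k : ℕ) := PresentedGroup (braceRels d e k)

open Multiplicative

lemma pow_val_natCast {G : Type*} [Monoid G] {g : G} {n : ℕ} (hg : g ^ n = 1) (m : ℕ) :
    g ^ (m : ZMod n).val = g ^ m := by
  rw [ZMod.val_natCast, ← pow_eq_pow_mod m hg]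

lemma ofAdd_pow_val {n : ℕ} [NeZero n] (a b : ZMod n) : ofAdd a ^ b.val = ofAdd (b * a) := by
  rw [← ofAdd_nsmul, nsmul_eq_mul, ZMod.natCast_zmod_val]

lemma ofAdd_one_pow_self (n : ℕ) : (ofAdd (1 : ZMod n)) ^ n = 1 := by
  rw [← ofAdd_nsmul, nsmul_one, ZMod.natCast_self, ofAdd_zero]

instance {G : Type*} [Group G] [Finite G] (g : G) : NeZero (orderOf g) :=
  ⟨(orderOf_pos g).ne'⟩

lemma exists_normal_natCard_eq_of_mulEquiv {G G' : Type*} [Group G] [Group G'] (F : G ≃* G')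
    {p : ℕ} (h : ∃ K : Subgroup G, K.Normal ∧ Nat.card K = p) :
    ∃ K : Subgroup G', K.Normal ∧ Nat.card K = p := by
  obtain ⟨K, hK, hKp⟩ := h
  exact ⟨K.map F.toMonoidHom, hK.map _ F.surjective,
    (Subgroup.card_map_of_injective F.injective).trans hKp⟩

namespace ZMod

section powHom

variable {G : Type*} [Group G] {n : ℕ} [NeZero n] (g : G) (hg : g ^ n = 1)

def powHom : Multiplicative (ZMod n) →* G :=
  MonoidHom.mk' (fun a => g ^ a.toAdd.val) fun a b => by
    rw [toAdd_mul, val_add, ← pow_eq_pow_mod _ hg, pow_add]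

lemma powHom_apply (a : Multiplicative (ZMod n)) : powHom g hg a = g ^ a.toAdd.val := rfl

@[simp] lemma powHom_ofAdd_natCast (m : ℕ) : powHom g hg (ofAdd (m : ZMod n)) = g ^ m :=
  pow_val_natCast hg m

@[simp] lemma powHom_ofAdd_one : powHom g hg (ofAdd 1) = g := by
  simpa using powHom_ofAdd_natCast g hg 1

end powHom

lemma powHom_orderOf_injective {G : Type*} [Group G] (g : G) [NeZero (orderOf g)] :
    Function.Injective (powHom g (pow_orderOf_eq_one g)) := by
  refine (injective_iff_map_eq_one _).mpr fun a ha => ?_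
  rw [powHom_apply, ← orderOf_dvd_iff_pow_eq_one] at ha
  rw [← ofAdd_toAdd a, (val_eq_zero _).mp (Nat.eq_zero_of_dvd_of_lt ha (val_lt _))]
  rfl

def unitsMulAut {e : ℕ} : (ZMod e)ˣ →* MulAut (Multiplicative (ZMod e)) :=
  MonoidHom.mk' (fun w => AddEquiv.toMultiplicative (DistribMulAction.toAddAut _ (ZMod e) w))
    fun v w => by ext; simp [mul_smul]

lemma unitsMulAut_apply {e : ℕ} [NeZero e] (w : (ZMod e)ˣ) (a : Multiplicative (ZMod e)) :
    unitsMulAut w a = a ^ (w : ZMod e).val := by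
  rw [← ofAdd_toAdd a, ofAdd_pow_val]
  rfl

end ZMod

namespace GGrp

open ZMod

section Presentation

variable {d e k : ℕ}

def σ : GGrp d e k := PresentedGroup.of 0

def τ : GGrp d e k := PresentedGroup.of 1

lemma σ_pow_eq_one : (σ : GGrp d e k) ^ e = 1 :=
  PresentedGroup.one_of_mem (by simp [braceRels])

lemma τ_pow_eq_one : (τ : GGrp d e k) ^ d = 1 :=
  PresentedGroup.one_of_mem (by simp [braceRels])

lemma τ_mul_σ_mul_τ_inv : (τ : GGrp d e k) * σ * τ⁻¹ = σ ^ k :=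
  mul_inv_eq_one.mp (PresentedGroup.one_of_mem (by simp [braceRels]))

lemma τ_pow_mul_σ_mul_τ_pow_inv (m : ℕ) :
    (τ : GGrp d e k) ^ m * σ * (τ ^ m)⁻¹ = σ ^ (k ^ m) := by
  induction m with
  | zero => simp
  | succ m ih =>
    calc (τ : GGrp d e k) ^ (m + 1) * σ * (τ ^ (m + 1))⁻¹
        = τ ^ m * (τ * σ * τ⁻¹) * (τ ^ m)⁻¹ := by group
      _ = (τ ^ m * σ * (τ ^ m)⁻¹) ^ k := by rw [τ_mul_σ_mul_τ_inv, conj_pow]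
      _ = σ ^ (k ^ (m + 1)) := by rw [ih, ← pow_mul, pow_succ]

section lift

variable {H : Type*} [Group H] (s t : H) (hs : s ^ e = 1) (ht : t ^ d = 1)
  (hst : t * s * t⁻¹ = s ^ k)

def lift : GGrp d e k →* H :=
  PresentedGroup.toGroup (f := ![s, t]) (by rintro r (rfl | rfl | rfl) <;> simp [hs, ht, hst])

@[simp] lemma lift_σ : lift s t hs ht hst σ = s := PresentedGroup.toGroup.of _

@[simp] lemma lift_τ : lift s t hs ht hst τ = t := PresentedGroup.toGroup.of _

end lift

lemma hom_ext {H : Type*} [Group H] {f g : GGrp d e k →* H} (hσ : f σ = g σ)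
    (hτ : f τ = g τ) : f = g :=
  PresentedGroup.ext fun i => by fin_cases i <;> assumption

def homOfPowEq {k' m : ℕ} (hm : (k' : ZMod e) ^ m = k) : GGrp d e k →* GGrp d e k' :=
  lift σ (τ ^ m) σ_pow_eq_one
    (by rw [← pow_mul, mul_comm, pow_mul, τ_pow_eq_one, one_pow])
    (by
      rw [τ_pow_mul_σ_mul_τ_pow_inv]
      exact pow_eq_pow_of_modEq ((ZMod.natCast_eq_natCast_iff _ _ _).mp (by push_cast; exact hm))
        σ_pow_eq_one)

lemma homOfPowEq_comp_homOfPowEq {k' m m' : ℕ} (hm : (k' : ZMod e) ^ m = k)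
    (hm' : (k : ZMod e) ^ m' = k') (hmm' : m * m' ≡ 1 [MOD d]) :
    (homOfPowEq hm).comp (homOfPowEq (d := d) hm') = MonoidHom.id _ := by
  refine hom_ext (by simp [homOfPowEq]) ?_
  simp only [homOfPowEq, MonoidHom.comp_apply, lift_τ, map_pow, ← pow_mul, MonoidHom.id_apply]
  simpa using pow_eq_pow_of_modEq hmm' τ_pow_eq_one

lemma nonempty_mulEquiv_of_powers_eq {k' : ℕ} (hke : k.Coprime e)
    (hord : orderOf (ZMod.unitOfCoprime k hke) = d)
    (h : Submonoid.powers (k : ZMod e) = Submonoid.powers (k' : ZMod e)) :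
    Nonempty (GGrp d e k ≃* GGrp d e k') := by
  obtain ⟨m, hm : (k' : ZMod e) ^ m = k⟩ := h ▸ Submonoid.mem_powers (k : ZMod e)
  obtain ⟨m', hm' : (k : ZMod e) ^ m' = k'⟩ := h.symm ▸ Submonoid.mem_powers (k' : ZMod e)
  have hmm' : m' * m ≡ 1 [MOD d] := by
    rw [← hord, ← pow_eq_pow_iff_modEq]
    ext
    simp [pow_mul, hm', hm]
  exact ⟨MonoidHom.toMulEquiv (homOfPowEq hm) (homOfPowEq hm')
    (homOfPowEq_comp_homOfPowEq hm' hm hmm')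
    (homOfPowEq_comp_homOfPowEq hm hm' (by rwa [mul_comm]))⟩

end Presentation

open SemidirectProduct

section Model

variable {e : ℕ} {u : (ZMod e)ˣ}

/-- `C_e ⋊ C_d` with the generator of `C_d` acting by multiplication by `u`, for `d = orderOf u`;
it is a model of `G(d, e, k)` for any `k` with `k ≡ u` mod `e`. -/
abbrev Model (u : (ZMod e)ˣ) :=
  Multiplicative (ZMod e) ⋊[unitsMulAut.comp (powHom u (pow_orderOf_eq_one u))]
    Multiplicative (ZMod (orderOf u))

lemma conj_inl [NeZero e] (x : Model u) (a : Multiplicative (ZMod e)) :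
    x * inl a * x⁻¹ = inl a ^ (powHom u (pow_orderOf_eq_one u) x.right : ZMod e).val := by
  rw [← map_pow, ← unitsMulAut_apply, ← MonoidHom.comp_apply unitsMulAut]
  ext <;> simp [mul_comm]

lemma orderOf_inl_ofAdd_one : orderOf (inl (ofAdd 1) : Model u) = e := by
  rw [orderOf_injective inl inl_injective, orderOf_ofAdd_eq_addOrderOf, ZMod.addOrderOf_one]

lemma inl_ofAdd_one_pow_self : (inl (ofAdd 1) : Model u) ^ e = 1 := by
  rw [← map_pow, ofAdd_one_pow_self, map_one]

lemma inr_ofAdd_one_pow_orderOf : (inr (ofAdd 1) : Model u) ^ orderOf u = 1 := by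
  rw [← map_pow, ofAdd_one_pow_self, map_one]

variable {k : ℕ}

lemma inr_conj_inl_ofAdd_one [NeZero e] (hk : (k : ZMod e) = u) :
    (inr (ofAdd 1) : Model u) * inl (ofAdd 1) * (inr (ofAdd 1))⁻¹ = inl (ofAdd 1) ^ k := by
  rw [conj_inl, right_inr, powHom_ofAdd_one, ← hk, pow_val_natCast inl_ofAdd_one_pow_self]

noncomputable def toModel [NeZero e] (hk : (k : ZMod e) = u) : GGrp (orderOf u) e k →* Model u :=
  lift _ _ inl_ofAdd_one_pow_self inr_ofAdd_one_pow_orderOf (inr_conj_inl_ofAdd_one hk)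

noncomputable def ofModel [NeZero e] (hk : (k : ZMod e) = u) : Model u →* GGrp (orderOf u) e k :=
  SemidirectProduct.lift (powHom σ σ_pow_eq_one) (powHom τ τ_pow_eq_one) fun b => by
    refine MonoidHom.ext fun a => ?_
    have hw : (powHom u (pow_orderOf_eq_one u) b : ZMod e) = (k ^ b.toAdd.val : ℕ) := by
      simp [powHom_apply, hk]
    simp only [MonoidHom.comp_apply, MulEquiv.coe_toMonoidHom, MulAut.conj_apply,
      unitsMulAut_apply, map_pow]
    rw [powHom_apply τ, powHom_apply σ _ a, ← conj_pow, τ_pow_mul_σ_mul_τ_pow_inv,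
      ← pow_mul, mul_comm, pow_mul, hw, pow_val_natCast σ_pow_eq_one]

noncomputable def modelEquiv [NeZero e] (hk : (k : ZMod e) = u) :
    GGrp (orderOf u) e k ≃* Model u :=
  MonoidHom.toMulEquiv (toModel hk) (ofModel hk)
    (hom_ext (by simp [toModel, ofModel]) (by simp [toModel, ofModel]))
    (SemidirectProduct.hom_ext
      (MonoidHom.ext fun a => by
        simp [toModel, ofModel, powHom_apply, map_pow, ← map_pow inl, ofAdd_pow_val])
      (MonoidHom.ext fun b => by
        simp [toModel, ofModel, powHom_apply, map_pow, ← map_pow inr, ofAdd_pow_val]))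

end Model

section Invariants

variable {e : ℕ} {u : (ZMod e)ˣ}

lemma mem_range_inl_of_coprime {x : Model u} (hx : (orderOf x).Coprime (orderOf u)) :
    x ∈ (inl : _ →* Model u).range := by
  rw [range_inl_eq_ker_rightHom, MonoidHom.mem_ker, ← orderOf_eq_one_iff]
  refine Nat.eq_one_of_dvd_coprimes hx (orderOf_map_dvd _ _) ?_
  simpa using orderOf_dvd_natCard (rightHom x)

variable [NeZero e]

lemma right_eq_one_of_commute_inl {x : Model u} (hx : Commute x (inl (ofAdd 1))) :
    x.right = 1 := by
  have h := conj_inl x (ofAdd 1)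
  rw [hx.eq, mul_inv_cancel_right, ← map_pow, ofAdd_pow_val, mul_one] at h
  exact powHom_orderOf_injective u
    ((Units.val_eq_one.mp (ofAdd.injective (inl_injective h)).symm).trans (map_one _).symm)

lemma normal_map_inl (H : Subgroup (Multiplicative (ZMod e))) :
    (H.map (inl : _ →* Model u)).Normal :=
  ⟨by
    rintro _ ⟨a, ha, rfl⟩ x
    rw [conj_inl]
    exact Subgroup.pow_mem _ (Subgroup.mem_map_of_mem _ ha) _⟩

/-- For `x ∈ K \ {1}`: either `x` commutes with `s = inl (ofAdd 1)`, and then lies in `C_e`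
because the action is faithful, or `[s, x] ∈ K` is a nontrivial element of `C_e`. -/
lemma exists_mem_range_inl_ne_one (K : Subgroup (Model u)) [K.Normal] (hK : K ≠ ⊥) :
    ∃ z ∈ K, z ≠ 1 ∧ z ∈ (inl : _ →* Model u).range := by
  obtain ⟨x, hxK, hx1⟩ := (K.bot_or_exists_ne_one).resolve_left hK
  set s : Model u := inl (ofAdd 1)
  by_cases hc : s * x * s⁻¹ * x⁻¹ = 1
  · refine ⟨x, hxK, hx1, ?_⟩
    rw [range_inl_eq_ker_rightHom, MonoidHom.mem_ker, rightHom_eq_right]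
    refine right_eq_one_of_commute_inl ?_
    rw [mul_inv_eq_one, mul_inv_eq_iff_eq_mul] at hc
    exact hc.symm
  · refine ⟨_, K.mul_mem (Subgroup.Normal.conj_mem ‹_› x hxK s) (K.inv_mem hxK), hc, ?_⟩
    rw [range_inl_eq_ker_rightHom, MonoidHom.mem_ker]
    simp [s]

lemma prime_dvd_iff_exists_normal {p : ℕ} (hp : p.Prime) :
    p ∣ e ↔ ∃ K : Subgroup (Model u), K.Normal ∧ Nat.card K = p := by
  have := Fact.mk hp
  constructor
  · intro hpe
    obtain ⟨g, hg⟩ := exists_prime_orderOf_dvd_card' (G := Multiplicative (ZMod e)) p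
      (by simpa using hpe)
    exact ⟨_, normal_map_inl (Subgroup.zpowers g),
      (Subgroup.card_map_of_injective inl_injective).trans ((Nat.card_zpowers g).trans hg)⟩
  · rintro ⟨K, hK, hKp⟩
    obtain ⟨_, hzK, hz1, a, rfl⟩ := exists_mem_range_inl_ne_one K (by
      rintro rfl
      exact hp.one_lt.ne (Subgroup.card_bot.symm.trans hKp))
    have hz : orderOf (inl a : Model u) = p :=
      orderOf_eq_prime (orderOf_dvd_iff_pow_eq_one.mp (hKp ▸ K.orderOf_dvd_natCard hzK)) hz1
    rw [← hz, orderOf_injective inl inl_injective]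
    simpa using orderOf_dvd_natCard a

lemma coe_mem_powers_of_mulEquiv {u' : (ZMod e)ˣ} (hcop : (orderOf u').Coprime e)
    (F : Model u ≃* Model u') : (u : ZMod e) ∈ Submonoid.powers (u' : ZMod e) := by
  set s := F (inl (ofAdd 1))
  have hs : orderOf s = e := by rw [MulEquiv.orderOf_eq, orderOf_inl_ofAdd_one]
  obtain ⟨a, ha⟩ := mem_range_inl_of_coprime (by rw [hs]; exact hcop.symm)
  set t := F (inr (ofAdd 1))
  have hconj : t * s * t⁻¹ = s ^ (u : ZMod e).val := by
    rw [← map_inv, ← map_mul, ← map_mul, conj_inl, right_inr, powHom_ofAdd_one, map_pow]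
  rw [← ha, conj_inl, ha, pow_eq_pow_iff_modEq, hs] at hconj
  refine ⟨t.right.toAdd.val, ?_⟩
  simpa [powHom_apply] using (ZMod.natCast_eq_natCast_iff _ _ _).mpr hconj

end Invariants

lemma eq_of_mulEquiv_model {e e' : ℕ} [NeZero e] [NeZero e'] {u : (ZMod e)ˣ}
    {u' : (ZMod e')ˣ} (he : Squarefree e) (he' : Squarefree e') (F : Model u ≃* Model u') :
    e = e' :=
  (Nat.Squarefree.ext_iff he he').mpr fun p hp => by
    rw [prime_dvd_iff_exists_normal (u := u) hp, prime_dvd_iff_exists_normal (u := u') hp]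
    exact ⟨exists_normal_natCard_eq_of_mulEquiv F, exists_normal_natCard_eq_of_mulEquiv F.symm⟩

end GGrp

theorem GGrp_iso_iff_general (n d e k d' e' k' : ℕ) (hsf : Squarefree n)
    (hde : n = d * e) (hde' : n = d' * e')
    (hcop : Nat.Coprime d e)
    (hke : Nat.Coprime k e) (hke' : Nat.Coprime k' e')
    (hord : orderOf (ZMod.unitOfCoprime k hke) = d)
    (hord' : orderOf (ZMod.unitOfCoprime k' hke') = d') :
    Nonempty (GGrp d e k ≃* GGrp d' e' k') ↔
      d = d' ∧ e = e' ∧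
        Submonoid.powers ((k : ZMod e)) = Submonoid.powers ((k' : ZMod e)) := by
  have he : NeZero e := ⟨right_ne_zero_of_mul (hde ▸ hsf.ne_zero)⟩
  have he' : NeZero e' := ⟨right_ne_zero_of_mul (hde' ▸ hsf.ne_zero)⟩
  constructor
  · rintro ⟨F⟩
    subst hord hord'
    have F' := ((GGrp.modelEquiv (ZMod.coe_unitOfCoprime k hke)).symm.trans F).trans
      (GGrp.modelEquiv (ZMod.coe_unitOfCoprime k' hke'))
    obtain rfl : e = e' := GGrp.eq_of_mulEquiv_model
      (hsf.squarefree_of_dvd (Dvd.intro_left _ hde.symm))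
      (hsf.squarefree_of_dvd (Dvd.intro_left _ hde'.symm)) F'
    have hd : orderOf (ZMod.unitOfCoprime k hke) = orderOf (ZMod.unitOfCoprime k' hke') :=
      Nat.eq_of_mul_eq_mul_right (Nat.pos_of_ne_zero he.out) (hde.symm.trans hde')
    refine ⟨hd, rfl, le_antisymm ?_ ?_⟩ <;> rw [Submonoid.powers_le]
    · simpa using GGrp.coe_mem_powers_of_mulEquiv (hd ▸ hcop) F'
    · simpa using GGrp.coe_mem_powers_of_mulEquiv hcop F'.symm
  · rintro ⟨rfl, rfl, h⟩
    exact GGrp.nonempty_mulEquiv_of_powers_eq hke hord h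

/-- `G(d,e,k) ≅ G(d',e',k')` iff `d = d'`, `e = e'` and `k`, `k'` generate the same
cyclic subgroup of `(ℤ/eℤ)ˣ` (expressed via the cyclic submonoids they generate in `ℤ/eℤ`). -/
theorem GGrp_iso_iff (n d e k d' e' k' : ℕ) (hsf : Squarefree n)
    (hde : n = d * e) (hde' : n = d' * e')
    (hcop : Nat.Coprime d e) (hcop' : Nat.Coprime d' e')
    (hke : Nat.Coprime k e) (hke' : Nat.Coprime k' e')
    (hord : orderOf (ZMod.unitOfCoprime k hke) = d)
    (hord' : orderOf (ZMod.unitOfCoprime k' hke') = d') :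
    Nonempty (GGrp d e k ≃* GGrp d' e' k') ↔
      d = d' ∧ e = e' ∧
        Submonoid.powers ((k : ZMod e)) = Submonoid.powers ((k' : ZMod e)) :=
  GGrp_iso_iff_general n d e k d' e' k' hsf hde hde' hcop hke hke' hord hord'
end

section
/- Conversely, let M and A be groups with the same underlying finite set B, such that the identity map gives a regular embedding of M into Hol(A), i.e., there is a homomorphism λ: M → Aut(A) and the identity map i: M → A satisfies i(b·c) = i(b)·λ_b(i(c)) (written additively: i(b∗c) = i(b) + λ_b(i(c))). Then defining a ∗ b = m-multiplication and + = A-addition on B yields a skew left brace (B, +, ∗) with multiplicative group M and additive group A. -/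
/-- A skew left brace structure on an additive group `(B,+)`: a second group operation
`∗` (written `mul`) satisfying `a ∗ (b + c) = (a ∗ b) + (−a) + (a ∗ c)`. -/
structure SkewBraceMul (B : Type*) [AddGroup B] where
  mul : B → B → B
  one : B
  inv : B → B
  mul_assoc : ∀ a b c, mul (mul a b) c = mul a (mul b c)
  one_mul : ∀ a, mul one a = a
  mul_one : ∀ a, mul a one = a
  inv_mul : ∀ a, mul (inv a) a = one
  compat : ∀ a b c, mul a (b + c) = mul a b + (-a + mul a c)

/-- Converse construction: suppose `B` carries an additive group structure `A = (B,+)`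
and a multiplicative group structure `M = (B,∗)` (given by `mul`, `one`, `inv`), and
`λ : M → Aut(A)` is a homomorphism (each `λ_b` a bijective additive endomorphism,
`λ_{b∗c} = λ_b ∘ λ_c`) such that the identity map satisfies the 1-cocycle identity
`b ∗ c = b + λ_b(c)` (a regular embedding `b ↦ (b, λ_b)` of `M` into `Hol(A)`).
Then `(B, +, ∗)` is a skew left brace with multiplicative group `M` and additive
group `A`. -/
theorem regular_embedding_to_brace {B : Type*} [AddGroup B]
    (mul : B → B → B) (one : B) (inv : B → B)
    (hassoc : ∀ a b c, mul (mul a b) c = mul a (mul b c))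
    (hone : ∀ a, mul one a = a) (hone' : ∀ a, mul a one = a)
    (hinv : ∀ a, mul (inv a) a = one)
    (lam : B → B → B)
    (hbij : ∀ b, Function.Bijective (lam b))
    (hadd : ∀ b x y, lam b (x + y) = lam b x + lam b y)
    (hhom : ∀ b c, lam (mul b c) = lam b ∘ lam c)
    (hcoc : ∀ b c, mul b c = b + lam b c) :
    ∃ S : SkewBraceMul B, S.mul = mul ∧ S.one = one ∧ S.inv = inv := by
  refine ⟨⟨mul, one, inv, hassoc, hone, hone', hinv, ?_⟩, rfl, rfl, rfl⟩
  intro a b c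
  simp only [hcoc, hadd]
  rw [← add_assoc, neg_add_cancel_left, add_assoc]
end
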